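/- Let c be bounded and strictly positive, and let β⁺, β⁻ ∈ ℝ^d with ‖β⁺‖₀ = ‖β⁻‖₀ and c(β⁺) < c(β⁻). Define L_γ(β) as the infimum over all coordinate paths from 0 ending at β of Σ_{k=1}^{|𝛃|} γ^k c(β_k). Then L_γ(β⁻) − L_γ(β⁺) → +∞ as γ → ∞. -/

import Mathlib

open Finset Filter

/-- Number of coordinates in which two vectors differ (the ℓ₀ "norm" of their difference). -/
noncomputable def diffCount {d : ℕ} (x y : Fin d → ℝ) : ℕ :=
  (Finset.univ.filter (fun i => x i ≠ y i)).card

/-- A coordinate path of length `K`: starts at `0`, each step changes at most one coordinate. -/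
def IsPath {d : ℕ} (K : ℕ) (p : ℕ → Fin d → ℝ) : Prop :=
  p 0 = 0 ∧ ∀ k, 1 ≤ k → k ≤ K → diffCount (p (k - 1)) (p k) ≤ 1

/-- Number of nonzero coordinates of a vector (‖β‖₀). -/
noncomputable def sparsity {d : ℕ} (β : Fin d → ℝ) : ℕ :=
  (Finset.univ.filter (fun i => β i ≠ 0)).card

/-- The cost sequence of a path of length `K`. -/
def costSeq {d : ℕ} (c : (Fin d → ℝ) → ℝ) (K : ℕ) (p : ℕ → Fin d → ℝ) : ℕ → ℝ :=
  fun k => if 1 ≤ k ∧ k ≤ K then c (p k) else 0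

/-- Geometric-weighted interpretability loss of a path of length `K`. -/
noncomputable def pathLoss {d : ℕ} (c : (Fin d → ℝ) → ℝ) (γ : ℝ) (K : ℕ)
    (p : ℕ → Fin d → ℝ) : ℝ :=
  ∑ k ∈ Finset.Icc 1 K, γ ^ k * c (p k)

/-- Model interpretability: infimum of the path loss over all explanations of `β`. -/
noncomputable def modelLoss {d : ℕ} (c : (Fin d → ℝ) → ℝ) (γ : ℝ) (β : Fin d → ℝ) : ℝ :=
  sInf {v : ℝ | ∃ K p, IsPath K p ∧ p K = β ∧ v = pathLoss c γ K p}

/-!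
Every path to `β` has length at least `‖β‖₀`, since a step raises the sparsity by at most one;
for `γ ≥ 1` this gives `L_γ(β⁻) ≥ γ^s c(β⁻)` with `s = ‖β⁻‖₀ = ‖β⁺‖₀`. Conversely, switching on the
nonzero coordinates of `β⁺` one at a time is a path of length `s`, whose loss is at most
`γ^s c(β⁺) + (s - 1) c_max γ^(s-1)`. The difference is therefore at least
`γ^(s-1) (γ (c(β⁻) - c(β⁺)) - (s - 1) c_max)`, which tends to infinity.
-/

section Sparsity

variable {d : ℕ}

lemma sparsity_eq_zero_iff {β : Fin d → ℝ} : sparsity β = 0 ↔ β = 0 := by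
  simp [sparsity, Finset.filter_eq_empty_iff, funext_iff]

lemma sparsity_le_sparsity_add_diffCount (x y : Fin d → ℝ) :
    sparsity y ≤ sparsity x + diffCount x y := by
  refine (Finset.card_le_card fun i hi => ?_).trans (Finset.card_union_le _ _)
  simp only [Finset.mem_filter, Finset.mem_univ, true_and, Finset.mem_union] at hi ⊢
  by_cases hx : x i = 0
  · exact Or.inr (hx ▸ Ne.symm hi)
  · exact Or.inl hx

end Sparsity

section Paths

variable {d : ℕ}

lemma isPath_of_diffCount_succ_le {K : ℕ} {p : ℕ → Fin d → ℝ} (h₀ : p 0 = 0)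
    (hstep : ∀ k < K, diffCount (p k) (p (k + 1)) ≤ 1) : IsPath K p := by
  refine ⟨h₀, fun k hk₁ hkK => ?_⟩
  obtain ⟨j, rfl⟩ := Nat.exists_eq_add_of_le' hk₁
  exact hstep j (by omega)

lemma IsPath.sparsity_le {K : ℕ} {p : ℕ → Fin d → ℝ} (hp : IsPath K p) :
    ∀ k ≤ K, sparsity (p k) ≤ k
  | 0, _ => by simp [hp.1, sparsity_eq_zero_iff]
  | k + 1, hk => by
    have hstep := hp.2 (k + 1) (by omega) hk
    have hprev := hp.sparsity_le k (by omega)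
    have := sparsity_le_sparsity_add_diffCount (p k) (p (k + 1))
    simp only [Nat.add_sub_cancel] at hstep
    omega

lemma IsPath.ne_zero {K : ℕ} {p : ℕ → Fin d → ℝ} (hp : IsPath K p) (hK : p K ≠ 0) : K ≠ 0 := by
  rintro rfl
  exact hK hp.1

lemma exists_isPath_sparsity (β : Fin d → ℝ) :
    ∃ p : ℕ → Fin d → ℝ, IsPath (sparsity β) p ∧ p (sparsity β) = β := by
  classical
  set l := (Finset.univ.filter fun i => β i ≠ 0).toList
  have hlen : l.length = sparsity β := Finset.length_toList _
  refine ⟨fun k i => if i ∈ l.take k then β i else 0, isPath_of_diffCount_succ_le ?_ ?_, ?_⟩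
  · funext i
    simp
  · intro k hk
    rw [← hlen] at hk
    refine (Finset.card_le_card (t := {l[k]}) fun i hi => ?_).trans (Finset.card_singleton _).le
    simp only [Finset.mem_filter, Finset.mem_univ, true_and, Finset.mem_singleton,
      List.take_add_one, List.getElem?_eq_getElem hk, Option.toList_some, List.mem_append,
      List.mem_singleton] at hi ⊢
    by_contra hne
    simp [hne] at hi
  · funext i
    rw [← hlen]
    change (if i ∈ l.take l.length then β i else 0) = β i
    rw [List.take_length]
    by_cases hi : β i = 0 <;> simp [l, hi]

end Paths

section Loss

variable {d : ℕ} {c : (Fin d → ℝ) → ℝ} {γ : ℝ}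

lemma pathLoss_succ (c : (Fin d → ℝ) → ℝ) (γ : ℝ) (K : ℕ) (p : ℕ → Fin d → ℝ) :
    pathLoss c γ (K + 1) p = pathLoss c γ K p + γ ^ (K + 1) * c (p (K + 1)) :=
  Finset.sum_Icc_succ_top (by omega) _

lemma pathLoss_nonneg (hc : ∀ x, 0 ≤ c x) (hγ : 0 ≤ γ) (K : ℕ) (p : ℕ → Fin d → ℝ) :
    0 ≤ pathLoss c γ K p :=
  Finset.sum_nonneg fun k _ => mul_nonneg (pow_nonneg hγ k) (hc _)

lemma pathLoss_le_mul_pow {cmax : ℝ} (hc : ∀ x, 0 ≤ c x) (hcmax : ∀ x, c x ≤ cmax) (hγ : 1 ≤ γ)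
    (K : ℕ) (p : ℕ → Fin d → ℝ) : pathLoss c γ K p ≤ K * cmax * γ ^ K := by
  calc pathLoss c γ K p ≤ ∑ _k ∈ Finset.Icc 1 K, γ ^ K * cmax :=
        Finset.sum_le_sum fun k hk => mul_le_mul (pow_le_pow_right₀ hγ (Finset.mem_Icc.1 hk).2)
          (hcmax _) (hc _) (by positivity)
    _ = K * cmax * γ ^ K := by
      simp only [Finset.sum_const, Nat.card_Icc, add_tsub_cancel_right, nsmul_eq_mul]; ring

lemma pow_mul_le_pathLoss (hc : ∀ x, 0 ≤ c x) (hγ : 0 ≤ γ) {K : ℕ} (hK : K ≠ 0)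
    (p : ℕ → Fin d → ℝ) : γ ^ K * c (p K) ≤ pathLoss c γ K p :=
  Finset.single_le_sum (f := fun k => γ ^ k * c (p k))
    (fun k _ => mul_nonneg (pow_nonneg hγ k) (hc _)) (Finset.mem_Icc.2 ⟨by omega, le_rfl⟩)

lemma modelLoss_le_pathLoss (hc : ∀ x, 0 ≤ c x) (hγ : 0 ≤ γ) {K : ℕ} {p : ℕ → Fin d → ℝ}
    (hp : IsPath K p) : modelLoss c γ (p K) ≤ pathLoss c γ K p :=
  csInf_le ⟨0, by rintro v ⟨K, q, -, -, rfl⟩; exact pathLoss_nonneg hc hγ K q⟩ ⟨K, p, hp, rfl, rfl⟩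

lemma le_modelLoss {β : Fin d → ℝ} {a : ℝ}
    (h : ∀ K p, IsPath K p → p K = β → a ≤ pathLoss c γ K p) : a ≤ modelLoss c γ β := by
  obtain ⟨p, hp, hβ⟩ := exists_isPath_sparsity β
  refine le_csInf ⟨_, _, p, hp, hβ, rfl⟩ ?_
  rintro v ⟨K, q, hq, hqβ, rfl⟩
  exact h K q hq hqβ

lemma pow_sparsity_mul_le_modelLoss (hc : ∀ x, 0 ≤ c x) (hγ : 1 ≤ γ) {β : Fin d → ℝ}
    (hβ : β ≠ 0) : γ ^ sparsity β * c β ≤ modelLoss c γ β := by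
  refine le_modelLoss fun K p hp hpβ => ?_
  have hK : sparsity β ≤ K := hpβ ▸ hp.sparsity_le K le_rfl
  calc γ ^ sparsity β * c β ≤ γ ^ K * c (p K) := by
        rw [hpβ]; gcongr; exact hc β
    _ ≤ pathLoss c γ K p := pow_mul_le_pathLoss hc (by linarith) (hp.ne_zero (hpβ ▸ hβ)) p

lemma modelLoss_le_of_sparsity_eq_succ {cmax : ℝ} (hc : ∀ x, 0 ≤ c x) (hcmax : ∀ x, c x ≤ cmax)
    (hγ : 1 ≤ γ) {β : Fin d → ℝ} {n : ℕ} (hn : sparsity β = n + 1) :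
    modelLoss c γ β ≤ n * cmax * γ ^ n + γ ^ (n + 1) * c β := by
  obtain ⟨p, hp, hpβ⟩ := exists_isPath_sparsity β
  rw [hn] at hp hpβ
  calc modelLoss c γ β = modelLoss c γ (p (n + 1)) := by rw [hpβ]
    _ ≤ pathLoss c γ (n + 1) p := modelLoss_le_pathLoss hc (by linarith) hp
    _ ≤ n * cmax * γ ^ n + γ ^ (n + 1) * c β := by
      rw [pathLoss_succ, hpβ]
      gcongr
      exact pathLoss_le_mul_pow hc hcmax hγ n p

end Loss

/-- If ‖β⁺‖₀ = ‖β⁻‖₀ and c(β⁺) < c(β⁻), then L_γ(β⁻) − L_γ(β⁺) → ∞ as γ → ∞. -/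
theorem stmt7 {d : ℕ} (c : (Fin d → ℝ) → ℝ) (cmax : ℝ)
    (hc : ∀ x, 0 < c x ∧ c x ≤ cmax)
    (βp βm : Fin d → ℝ) (hs : sparsity βp = sparsity βm) (hcost : c βp < c βm) :
    Filter.Tendsto (fun γ : ℝ => modelLoss c γ βm - modelLoss c γ βp)
      Filter.atTop Filter.atTop := by
  have hc₀ : ∀ x, 0 ≤ c x := fun x => (hc x).1.le
  have hβm : βm ≠ 0 := by
    rintro rfl
    have hβp := sparsity_eq_zero_iff.1 (hs.trans (sparsity_eq_zero_iff.2 rfl))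
    exact hcost.ne (by rw [hβp])
  have hβp : βp ≠ 0 := fun h => hβm (sparsity_eq_zero_iff.1 (hs ▸ sparsity_eq_zero_iff.2 h))
  obtain ⟨n, hn⟩ := Nat.exists_eq_add_one_of_ne_zero (sparsity_eq_zero_iff.not.2 hβp)
  have hlin : Tendsto (fun γ : ℝ => γ * (c βm - c βp) + -(n * cmax)) atTop atTop :=
    tendsto_atTop_add_const_right _ _ (tendsto_id.atTop_mul_const (sub_pos.2 hcost))
  refine tendsto_atTop_mono' _ ?_ hlin
  filter_upwards [eventually_ge_atTop 1, hlin.eventually_ge_atTop 0] with γ hγ hpos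
  have lower := pow_sparsity_mul_le_modelLoss hc₀ hγ hβm
  have upper := modelLoss_le_of_sparsity_eq_succ hc₀ (fun x => (hc x).2) hγ hn
  rw [← hs, hn] at lower
  calc γ * (c βm - c βp) + -(n * cmax)
      ≤ γ ^ n * (γ * (c βm - c βp) + -(n * cmax)) := le_mul_of_one_le_left hpos (one_le_pow₀ hγ)
    _ = γ ^ (n + 1) * c βm - (n * cmax * γ ^ n + γ ^ (n + 1) * c βp) := by ring
    _ ≤ _ := by linarith
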